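/- Define ρ : [0,1] → ℝ by ρ(x) = 4(sin²(2πx) + sin²(3πx)), and φ_1(x) = √2 sin(2πx), φ_2(x) = √2 sin(3πx). Then: (i) φ_1 and φ_2 are L²(0,1)-orthonormal, i.e. ∫_0^1 φ_1 φ_2 = 0 and ∫_0^1 φ_1² = ∫_0^1 φ_2² = 1; (ii) φ_1² + φ_2² = ρ/2 on [0,1] and ρ > 0 on (0,1); (iii) the function θ : (0,1) → (−π, π] defined by θ(x) = atan2(φ_1(x), φ_2(x)) (the unique angle in (−π, π] with sinθ = φ_1/√(ρ/2) and cosθ = φ_2/√(ρ/2)) has a jump discontinuity at x = 1/2: the left limit of θ at 1/2 is π and the right limit is −π. -/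

import Mathlib

open MeasureTheory Real Filter Topology Set

noncomputable section

/-- `ρ(x) = 4(sin²(2πx) + sin²(3πx))`. -/
def rhoEx (x : ℝ) : ℝ := 4 * ((Real.sin (2*π*x))^2 + (Real.sin (3*π*x))^2)

/-- `φ₁(x) = √2 sin(2πx)`. -/
def phi1 (x : ℝ) : ℝ := Real.sqrt 2 * Real.sin (2*π*x)

/-- `φ₂(x) = √2 sin(3πx)`. -/
def phi2 (x : ℝ) : ℝ := Real.sqrt 2 * Real.sin (3*π*x)

/-- `θ(x) = atan2(φ₁(x), φ₂(x))`, realized as the complex argument of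
`φ₂(x) + φ₁(x)·i`, the unique angle in `(−π, π]` of the point `(φ₂(x), φ₁(x))`. -/
def thetaEx (x : ℝ) : ℝ := Complex.arg ((phi2 x : ℂ) + (phi1 x : ℂ) * Complex.I)

/-! The orthonormality relations are the classical ones for `sin (kπx)` on `[0, 1]`, obtained from
the product-to-sum formula. Since `sin πx = sin (3πx - 2πx)`, the functions `sin 2πx` and `sin 3πx`
have no common zero in `(0, 1)`, so `ρ > 0` there. At `x = 1/2` the point `(φ₂, φ₁)` is `(-√2, 0)`,
on the branch cut of `atan2`, while `φ₁ = √2 sin 2πx` passes from positive to negative values: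
the angle approaches `π` from the left and `-π` from the right. -/

theorem integral_cos_int_mul_pi_mul {k : ℤ} (hk : k ≠ 0) :
    ∫ x in (0:ℝ)..1, cos (k * π * x) = 0 := by
  have hc : (k * π : ℝ) ≠ 0 := mul_ne_zero (Int.cast_ne_zero.2 hk) pi_ne_zero
  rw [intervalIntegral.integral_comp_mul_left (fun u => cos u) hc]
  simp [integral_cos, sin_int_mul_pi]

theorem integral_sin_int_mul_pi_mul_sin {m n : ℤ} (hmn : m + n ≠ 0) :
    ∫ x in (0:ℝ)..1, sin (m * π * x) * sin (n * π * x) =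
      (∫ x in (0:ℝ)..1, cos ((m - n : ℤ) * π * x)) / 2 := by
  have hprod : ∀ x : ℝ, sin (m * π * x) * sin (n * π * x) =
      (cos ((m - n : ℤ) * π * x) - cos ((m + n : ℤ) * π * x)) / 2 := fun x => by
    push_cast
    rw [sub_mul, sub_mul, add_mul, add_mul, ← two_mul_sin_mul_sin]
    ring
  simp_rw [hprod]
  rw [intervalIntegral.integral_div, intervalIntegral.integral_sub
    ((by fun_prop : Continuous _).intervalIntegrable 0 1)
    ((by fun_prop : Continuous _).intervalIntegrable 0 1),
    integral_cos_int_mul_pi_mul hmn, sub_zero]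

theorem integral_sin_int_mul_pi_mul_sin_of_ne {m n : ℤ} (h : m ≠ n) (hmn : m + n ≠ 0) :
    ∫ x in (0:ℝ)..1, sin (m * π * x) * sin (n * π * x) = 0 := by
  rw [integral_sin_int_mul_pi_mul_sin hmn, integral_cos_int_mul_pi_mul (sub_ne_zero.2 h), zero_div]

theorem integral_sin_int_mul_pi_mul_sq {n : ℤ} (hn : n ≠ 0) :
    ∫ x in (0:ℝ)..1, sin (n * π * x) ^ 2 = 1 / 2 := by
  simp_rw [sq]
  rw [integral_sin_int_mul_pi_mul_sin (by omega)]
  simp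

theorem integral_phi1_mul_phi2 : ∫ x in (0:ℝ)..1, phi1 x * phi2 x = 0 := by
  have h := integral_sin_int_mul_pi_mul_sin_of_ne (m := 2) (n := 3) (by norm_num) (by norm_num)
  push_cast at h
  have hprod : ∀ x, phi1 x * phi2 x = 2 * (sin (2 * π * x) * sin (3 * π * x)) := fun x => by
    rw [phi1, phi2, mul_mul_mul_comm, mul_self_sqrt zero_le_two]
  simp_rw [hprod]
  rw [intervalIntegral.integral_const_mul, h, mul_zero]

theorem integral_phi1_sq : ∫ x in (0:ℝ)..1, phi1 x ^ 2 = 1 := by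
  have h := integral_sin_int_mul_pi_mul_sq (n := 2) (by norm_num)
  push_cast at h
  simp_rw [phi1, mul_pow, sq_sqrt zero_le_two]
  rw [intervalIntegral.integral_const_mul, h]; norm_num

theorem integral_phi2_sq : ∫ x in (0:ℝ)..1, phi2 x ^ 2 = 1 := by
  have h := integral_sin_int_mul_pi_mul_sq (n := 3) (by norm_num)
  push_cast at h
  simp_rw [phi2, mul_pow, sq_sqrt zero_le_two]
  rw [intervalIntegral.integral_const_mul, h]; norm_num

theorem phi1_sq_add_phi2_sq (x : ℝ) : phi1 x ^ 2 + phi2 x ^ 2 = rhoEx x / 2 := by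
  simp only [phi1, phi2, rhoEx, mul_pow, sq_sqrt zero_le_two]
  ring

theorem rhoEx_pos {x : ℝ} (hx : x ∈ Ioo (0:ℝ) 1) : 0 < rhoEx x := by
  have hsin : sin (π * x) ≠ 0 :=
    (sin_pos_of_pos_of_lt_pi (by nlinarith [pi_pos, hx.1]) (by nlinarith [pi_pos, hx.2])).ne'
  have hsub : sin (π * x) =
      sin (3 * π * x) * cos (2 * π * x) - cos (3 * π * x) * sin (2 * π * x) := by
    rw [← sin_sub]; ring_nf
  have hne : sin (2 * π * x) ≠ 0 ∨ sin (3 * π * x) ≠ 0 := by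
    by_contra! h
    exact hsin (by rw [hsub, h.1, h.2]; ring)
  unfold rhoEx
  rcases hne with h | h <;> positivity

theorem Complex.sin_arg_add_mul_I (a b : ℝ) :
    Real.sin (Complex.arg (a + b * Complex.I)) = b / √(a ^ 2 + b ^ 2) := by
  rw [Complex.sin_arg, Complex.norm_add_mul_I]
  simp

theorem Complex.cos_arg_add_mul_I {a b : ℝ} (h : a ^ 2 + b ^ 2 ≠ 0) :
    Real.cos (Complex.arg (a + b * Complex.I)) = a / √(a ^ 2 + b ^ 2) := by
  have hz : (a + b * Complex.I : ℂ) ≠ 0 := by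
    rw [← norm_ne_zero_iff, Complex.norm_add_mul_I]
    exact (sqrt_pos.2 (lt_of_le_of_ne (by positivity) h.symm)).ne'
  rw [Complex.cos_arg hz, Complex.norm_add_mul_I]
  simp

theorem Filter.Tendsto.arg_of_im_nonneg {α : Type*} {l : Filter α} {f : α → ℂ} {z : ℂ}
    (hf : Tendsto f l (𝓝 z)) (hre : z.re < 0) (him : z.im = 0)
    (h : ∀ᶠ a in l, 0 ≤ (f a).im) :
    Tendsto (fun a => Complex.arg (f a)) l (𝓝 π) :=
  (Complex.tendsto_arg_nhdsWithin_im_nonneg_of_re_neg_of_im_zero hre him).comp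
    (tendsto_nhdsWithin_iff.2 ⟨hf, h⟩)

theorem Filter.Tendsto.arg_of_im_neg {α : Type*} {l : Filter α} {f : α → ℂ} {z : ℂ}
    (hf : Tendsto f l (𝓝 z)) (hre : z.re < 0) (him : z.im = 0)
    (h : ∀ᶠ a in l, (f a).im < 0) :
    Tendsto (fun a => Complex.arg (f a)) l (𝓝 (-π)) :=
  (Complex.tendsto_arg_nhdsWithin_im_neg_of_re_neg_of_im_zero hre him).comp
    (tendsto_nhdsWithin_iff.2 ⟨hf, h⟩)

theorem sin_thetaEx (x : ℝ) : sin (thetaEx x) = phi1 x / √(rhoEx x / 2) := by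
  rw [thetaEx, Complex.sin_arg_add_mul_I, add_comm, phi1_sq_add_phi2_sq]

theorem cos_thetaEx {x : ℝ} (hx : x ∈ Ioo (0:ℝ) 1) :
    cos (thetaEx x) = phi2 x / √(rhoEx x / 2) := by
  have h : phi2 x ^ 2 + phi1 x ^ 2 ≠ 0 := by
    rw [add_comm, phi1_sq_add_phi2_sq]; exact (half_pos (rhoEx_pos hx)).ne'
  rw [thetaEx, Complex.cos_arg_add_mul_I h, add_comm, phi1_sq_add_phi2_sq]

theorem phi1_pos {x : ℝ} (hx : x ∈ Ioo (0:ℝ) (1/2)) : 0 < phi1 x :=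
  mul_pos (by positivity)
    (sin_pos_of_pos_of_lt_pi (by nlinarith [pi_pos, hx.1]) (by nlinarith [pi_pos, hx.2]))

theorem phi1_neg {x : ℝ} (hx : x ∈ Ioo (1/2 : ℝ) 1) : phi1 x < 0 := by
  have : sin (2 * π * x) < 0 := by
    rw [← sin_sub_two_pi]
    exact sin_neg_of_neg_of_neg_pi_lt (by nlinarith [pi_pos, hx.2]) (by nlinarith [pi_pos, hx.1])
  exact mul_neg_of_pos_of_neg (by positivity) this

theorem tendsto_phi2_add_phi1_mul_I_half :
    Tendsto (fun x => (phi2 x : ℂ) + phi1 x * Complex.I) (𝓝 (1/2)) (𝓝 (-√2 : ℝ)) := by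
  have hphi1 : phi1 (1/2) = 0 := by
    rw [phi1, show 2 * π * (1/2 : ℝ) = π by ring, sin_pi, mul_zero]
  have hphi2 : phi2 (1/2) = -√2 := by
    rw [phi2, show 3 * π * (1/2 : ℝ) = π / 2 + π by ring, sin_add_pi, sin_pi_div_two]; ring
  have hcont : Continuous fun x => (phi2 x : ℂ) + phi1 x * Complex.I := by
    unfold phi1 phi2; fun_prop
  have h := hcont.tendsto (1/2)
  rwa [hphi1, hphi2, Complex.ofReal_zero, zero_mul, add_zero] at h

theorem tendsto_thetaEx_nhdsLT_half : Tendsto thetaEx (𝓝[<] (1/2)) (𝓝 π) :=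
  (tendsto_phi2_add_phi1_mul_I_half.mono_left nhdsWithin_le_nhds).arg_of_im_nonneg
    (by simp) (by simp) <| by
    filter_upwards [Ioo_mem_nhdsLT (by norm_num : (0:ℝ) < 1/2)] with x hx
    simpa using (phi1_pos hx).le

theorem tendsto_thetaEx_nhdsGT_half : Tendsto thetaEx (𝓝[>] (1/2)) (𝓝 (-π)) :=
  (tendsto_phi2_add_phi1_mul_I_half.mono_left nhdsWithin_le_nhds).arg_of_im_neg
    (by simp) (by simp) <| by
    filter_upwards [Ioo_mem_nhdsGT (by norm_num : (1/2:ℝ) < 1)] with x hx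
    simpa using phi1_neg hx

/-- `φ₁, φ₂` are `L²(0,1)`-orthonormal, `φ₁² + φ₂² = ρ/2` with
`ρ > 0` on `(0,1)`, the angle field `θ = atan2(φ₁, φ₂) ∈ (−π, π]` satisfies
`sin θ = φ₁/√(ρ/2)` and `cos θ = φ₂/√(ρ/2)` on `(0,1)`, and `θ` has a jump
discontinuity at `x = 1/2`: its left limit there is `π` and its right limit is `−π`. -/
theorem angle_field_jump_discontinuity :
    ((∫ x in (0:ℝ)..1, phi1 x * phi2 x) = 0 ∧
      (∫ x in (0:ℝ)..1, (phi1 x)^2) = 1 ∧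
      (∫ x in (0:ℝ)..1, (phi2 x)^2) = 1) ∧
    (∀ x : ℝ, (phi1 x)^2 + (phi2 x)^2 = rhoEx x / 2) ∧
    (∀ x ∈ Ioo (0:ℝ) 1, 0 < rhoEx x) ∧
    (∀ x ∈ Ioo (0:ℝ) 1,
      Real.sin (thetaEx x) = phi1 x / Real.sqrt (rhoEx x / 2) ∧
      Real.cos (thetaEx x) = phi2 x / Real.sqrt (rhoEx x / 2) ∧
      thetaEx x ∈ Ioc (-π) π) ∧
    Filter.Tendsto thetaEx (nhdsWithin (1/2 : ℝ) (Iio (1/2))) (nhds π) ∧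
    Filter.Tendsto thetaEx (nhdsWithin (1/2 : ℝ) (Ioi (1/2))) (nhds (-π)) :=
  ⟨⟨integral_phi1_mul_phi2, integral_phi1_sq, integral_phi2_sq⟩, phi1_sq_add_phi2_sq,
    fun _ => rhoEx_pos, fun x hx => ⟨sin_thetaEx x, cos_thetaEx hx, Complex.arg_mem_Ioc _⟩,
    tendsto_thetaEx_nhdsLT_half, tendsto_thetaEx_nhdsGT_half⟩
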